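/- arXiv:1907.04683 — 9 statements merged into one kernel-verified Lean document; each statement's English description precedes it below -/
import Mathlib

section
/- Suppose x ∈ U and y ∈ ∂U is a ρ-closest point to x, i.e., ρ(x) = γ(x−y) + φ(y). Then y is a ρ-closest point to every point of the segment from x to y: for every t ∈ [0,1], letting z = x + t(y−x), one has ρ(z) = γ(z−y) + φ(y) = (1−t)·γ(x−y) + φ(y); in particular ρ varies affinely along the segment [x,y]. -/
open RealInnerProductSpace

/-- If y ∈ ∂U is a ρ-closest point to x ∈ U, i.e. ρ(x) = γ(x−y) + φ(y), then y is a
ρ-closest point to every point z = x + t(y−x), t ∈ [0,1], of the segment [x,y]: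
ρ(z) = γ(z−y) + φ(y) = (1−t)γ(x−y) + φ(y); in particular ρ is affine on [x,y]. -/
theorem rho_closest_point_along_segment (n : ℕ) (hn : 1 ≤ n)
    (K : Set (EuclideanSpace ℝ (Fin n)))
    (hKcomp : IsCompact K) (hKconv : Convex ℝ K)
    (hK0 : (0 : EuclideanSpace ℝ (Fin n)) ∈ interior K)
    (U : Set (EuclideanSpace ℝ (Fin n)))
    (hUopen : IsOpen U) (hUbdd : Bornology.IsBounded U) (hUne : U.Nonempty)
    (φ : EuclideanSpace ℝ (Fin n) → ℝ)
    (hφ : ∀ x y : EuclideanSpace ℝ (Fin n),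
      -gauge K (y - x) ≤ φ x - φ y ∧ φ x - φ y ≤ gauge K (x - y))
    (ρ : EuclideanSpace ℝ (Fin n) → ℝ)
    (hρ : ∀ x, ρ x = sInf ((fun y => gauge K (x - y) + φ y) '' frontier U))
    (x y : EuclideanSpace ℝ (Fin n)) (hx : x ∈ U) (hy : y ∈ frontier U)
    (hclosest : ρ x = gauge K (x - y) + φ y) :
    ∀ t : ℝ, t ∈ Set.Icc (0 : ℝ) 1 →
      ρ (x + t • (y - x)) = gauge K ((x + t • (y - x)) - y) + φ y ∧
      ρ (x + t • (y - x)) = (1 - t) * gauge K (x - y) + φ y := by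
  intro t ht
  obtain ⟨ht0, ht1⟩ := ht
  set z := x + t • (y - x) with hz
  have habs : Absorbent ℝ K := absorbent_nhds_zero (mem_interior_iff_mem_nhds.mp hK0)
  have hxz : x - z = t • (x - y) := by rw [hz]; module
  have hzy : z - y = (1 - t) • (x - y) := by rw [hz]; module
  have hgxz : gauge K (x - z) = t * gauge K (x - y) := by
    rw [hxz, gauge_smul_of_nonneg ht0, smul_eq_mul]
  have hgzy : gauge K (z - y) = (1 - t) * gauge K (x - y) := by
    rw [hzy, gauge_smul_of_nonneg (by linarith), smul_eq_mul]
  have hbdd : ∀ w, BddBelow ((fun v => gauge K (w - v) + φ v) '' frontier U) := by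
    intro w
    refine ⟨φ w, ?_⟩
    rintro _ ⟨v, hv, rfl⟩
    have := (hφ w v).2
    simp only
    linarith
  have hle : ρ z ≤ gauge K (z - y) + φ y := by
    rw [hρ z]
    exact csInf_le (hbdd z) ⟨y, hy, rfl⟩
  have hge : gauge K (x - y) + φ y - gauge K (x - z) ≤ ρ z := by
    rw [hρ z]
    apply le_csInf ⟨_, Set.mem_image_of_mem _ hy⟩
    rintro _ ⟨v, hv, rfl⟩
    have h1 : ρ x ≤ gauge K (x - v) + φ v := by
      rw [hρ x]; exact csInf_le (hbdd x) ⟨v, hv, rfl⟩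
    have h2 : gauge K (x - v) ≤ gauge K (x - z) + gauge K (z - v) := by
      have := gauge_add_le hKconv habs (x := x - z) (y := z - v)
      rw [sub_add_sub_cancel] at this
      exact this
    rw [hclosest] at h1
    simp only
    linarith
  have key : ρ z = gauge K (z - y) + φ y := by
    have : gauge K (x - y) = gauge K (x - z) + gauge K (z - y) := by
      rw [hgxz, hgzy]; ring
    linarith
  exact ⟨key, by rw [key, hgzy]⟩
end

section
/- Suppose φ satisfies the strict Lipschitz property: −γ(y−x) < φ(x) − φ(y) < γ(x−y) for all x ≠ y in ℝⁿ. If x ∈ U and y ∈ ∂U is a ρ-closest point to x, i.e., ρ(x) = γ(x−y) + φ(y), then the open segment ]x,y[ = {x + t(y−x) : 0 < t < 1} is contained in U. -/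
open RealInnerProductSpace

/-- If φ satisfies the strict Lipschitz property and y ∈ ∂U is a ρ-closest point to
x ∈ U, then the open segment ]x,y[ is contained in U. -/
theorem open_segment_to_closest_point_subset (n : ℕ) (hn : 1 ≤ n)
    (K : Set (EuclideanSpace ℝ (Fin n)))
    (hKcomp : IsCompact K) (hKconv : Convex ℝ K)
    (hK0 : (0 : EuclideanSpace ℝ (Fin n)) ∈ interior K)
    (U : Set (EuclideanSpace ℝ (Fin n)))
    (hUopen : IsOpen U) (hUbdd : Bornology.IsBounded U) (hUne : U.Nonempty)
    (φ : EuclideanSpace ℝ (Fin n) → ℝ)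
    (hφ : ∀ x y : EuclideanSpace ℝ (Fin n), x ≠ y →
      -gauge K (y - x) < φ x - φ y ∧ φ x - φ y < gauge K (x - y))
    (ρ : EuclideanSpace ℝ (Fin n) → ℝ)
    (hρ : ∀ x, ρ x = sInf ((fun y => gauge K (x - y) + φ y) '' frontier U))
    (x y : EuclideanSpace ℝ (Fin n)) (hx : x ∈ U) (hy : y ∈ frontier U)
    (hclosest : ρ x = gauge K (x - y) + φ y) :
    ∀ t : ℝ, 0 < t → t < 1 → x + t • (y - x) ∈ U := by
  intro t ht0 ht1
  by_contra hz
  -- the path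
  set g : ℝ → EuclideanSpace ℝ (Fin n) := fun s => x + s • (y - x) with hg
  have hgcont : Continuous g := by
    continuity
  -- the first exit time
  set C : Set ℝ := Set.Icc 0 t ∩ g ⁻¹' Uᶜ with hC
  have hCclosed : IsClosed C := isClosed_Icc.inter (hUopen.isClosed_compl.preimage hgcont)
  have htC : t ∈ C := ⟨⟨le_of_lt ht0, le_refl t⟩, hz⟩
  have hCne : C.Nonempty := ⟨t, htC⟩
  have hCbdd : BddBelow C := ⟨0, fun a ha => ha.1.1⟩
  set s := sInf C with hs
  have hsC : s ∈ C := hCclosed.csInf_mem hCne hCbdd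
  have hs0 : 0 ≤ s := hsC.1.1
  have hst : s ≤ t := hsC.1.2
  have hgsU : g s ∉ U := hsC.2
  have hxU0 : g 0 ∈ U := by simp [hg, hx]
  have hs0' : 0 < s := by
    rcases lt_or_eq_of_le hs0 with h | h
    · exact h
    · exact absurd (h ▸ hxU0) hgsU
  -- g s ∈ closure U : g r ∈ U for all r ∈ [0, s)
  have hmemU : ∀ r, 0 ≤ r → r < s → g r ∈ U := by
    intro r hr0 hrs
    by_contra hrU
    exact absurd (csInf_le hCbdd ⟨⟨hr0, hrs.le.trans hst⟩, hrU⟩) (not_le.mpr hrs)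
  have hclos : g s ∈ closure U := by
    have : Filter.Tendsto g (nhdsWithin s (Set.Iio s)) (nhds (g s)) :=
      hgcont.continuousAt.tendsto.mono_left nhdsWithin_le_nhds
    refine mem_closure_of_tendsto this ?_
    filter_upwards [self_mem_nhdsWithin, Ico_mem_nhdsLT hs0'] with r hr hr2
    exact hmemU r hr2.1 hr
  have hw : g s ∈ frontier U := by
    rw [hUopen.frontier_eq]
    exact ⟨hclos, hgsU⟩
  -- x ≠ y
  have hyU : y ∉ U := by
    have := hUopen.frontier_eq ▸ hy
    exact this.2
  have hxy : x ≠ y := fun h => hyU (h ▸ hx)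
  have hs1 : s < 1 := lt_of_le_of_lt hst ht1
  set w := g s with hwdef
  have hwy : w ≠ y := by
    intro h
    apply hxy
    have hh : x + s • (y - x) = y := h
    have h1 : (1 - s) • (y - x) = 0 := by
      linear_combination (norm := module) -hh
    rcases smul_eq_zero.mp h1 with h' | h'
    · have : s = 1 := by linarith [h']
      exact absurd this (by linarith)
    · exact (sub_eq_zero.mp h').symm
  have hxw : x - w = s • (x - y) := by
    simp only [hwdef, hg]
    module
  have hwy' : w - y = (1 - s) • (x - y) := by
    simp only [hwdef, hg]
    module
  have hgauge1 : gauge K (x - w) = s * gauge K (x - y) := by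
    rw [hxw, gauge_smul_of_nonneg hs0, smul_eq_mul]
  have hgauge2 : gauge K (w - y) = (1 - s) * gauge K (x - y) := by
    rw [hwy', gauge_smul_of_nonneg (by linarith : (0:ℝ) ≤ 1 - s), smul_eq_mul]
  -- ρ x ≤ gauge K (x - w) + φ w
  have hbdd : BddBelow ((fun y => gauge K (x - y) + φ y) '' frontier U) := by
    refine ⟨φ x, ?_⟩
    rintro a ⟨u, hu, rfl⟩
    have hxu : x ≠ u := by
      intro h
      have := hUopen.frontier_eq ▸ hu
      exact this.2 (h ▸ hx)
    have := (hφ x u hxu).2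
    show φ x ≤ gauge K (x - u) + φ u
    linarith
  have hle : ρ x ≤ gauge K (x - w) + φ w := by
    rw [hρ x]
    exact csInf_le hbdd ⟨w, hw, rfl⟩
  have hlt : φ w - φ y < gauge K (w - y) := (hφ w y hwy).2
  rw [hclosest] at hle
  rw [hgauge1] at hle
  rw [hgauge2] at hlt
  linarith
end

section
/- Suppose γ is strictly convex, i.e., γ(a+b) < γ(a) + γ(b) whenever a ≠ c·b and b ≠ c·a for every real c ≥ 0, and suppose φ satisfies the strict Lipschitz property −γ(y−x) < φ(x) − φ(y) < γ(x−y) for all x ≠ y. If x ∈ U and y ∈ ∂U satisfies ρ(x) = γ(x−y) + φ(y), then for every z in the open segment ]x,y[ = {x + t(y−x) : 0 < t < 1}, y is the unique ρ-closest point to z: every y' ∈ ∂U with ρ(z) = γ(z−y') + φ(y') satisfies y' = y. -/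
open RealInnerProductSpace

/-- If γ is strictly convex and φ satisfies the strict Lipschitz property, and
y ∈ ∂U is a ρ-closest point to x ∈ U, then y is the unique ρ-closest point to every
point z of the open segment ]x,y[. -/
theorem unique_closest_point_on_open_segment (n : ℕ) (hn : 1 ≤ n)
    (K : Set (EuclideanSpace ℝ (Fin n)))
    (hKcomp : IsCompact K) (hKconv : Convex ℝ K)
    (hK0 : (0 : EuclideanSpace ℝ (Fin n)) ∈ interior K)
    (hstrict : ∀ a b : EuclideanSpace ℝ (Fin n),
      (∀ c : ℝ, 0 ≤ c → a ≠ c • b) → (∀ c : ℝ, 0 ≤ c → b ≠ c • a) →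
      gauge K (a + b) < gauge K a + gauge K b)
    (U : Set (EuclideanSpace ℝ (Fin n)))
    (hUopen : IsOpen U) (hUbdd : Bornology.IsBounded U) (hUne : U.Nonempty)
    (φ : EuclideanSpace ℝ (Fin n) → ℝ)
    (hφ : ∀ x y : EuclideanSpace ℝ (Fin n), x ≠ y →
      -gauge K (y - x) < φ x - φ y ∧ φ x - φ y < gauge K (x - y))
    (ρ : EuclideanSpace ℝ (Fin n) → ℝ)
    (hρ : ∀ x, ρ x = sInf ((fun y => gauge K (x - y) + φ y) '' frontier U))
    (x y : EuclideanSpace ℝ (Fin n)) (hx : x ∈ U) (hy : y ∈ frontier U)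
    (hclosest : ρ x = gauge K (x - y) + φ y) :
    ∀ t : ℝ, 0 < t → t < 1 →
      ∀ y' ∈ frontier U,
        ρ (x + t • (y - x)) = gauge K ((x + t • (y - x)) - y') + φ y' → y' = y := by
  intro t ht ht1 y' hy' hmin
  set z := x + t • (y - x) with hz
  -- basic facts
  have habs : Absorbent ℝ K := absorbent_nhds_zero (mem_interior_iff_mem_nhds.mp hK0)
  have hxy : x ≠ y := by
    intro h
    have : y ∉ U := by
      rw [hUopen.frontier_eq] at hy
      exact hy.2
    exact this (h ▸ hx)
  have hxysub : x - y ≠ 0 := sub_ne_zero.mpr hxy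
  have hbdd : ∀ w : EuclideanSpace ℝ (Fin n),
      BddBelow ((fun p => gauge K (w - p) + φ p) '' frontier U) := by
    intro w
    refine ⟨φ w, ?_⟩
    rintro v ⟨p, hp, rfl⟩
    by_cases hwp : w = p
    · simp [hwp, gauge_zero]
    · have := (hφ w p hwp).2
      simp only
      linarith
  have hne : ((fun p => gauge K (z - p) + φ p) '' frontier U).Nonempty := ⟨_, ⟨y, hy, rfl⟩⟩
  -- inequalities
  have h1 : ρ x ≤ gauge K (x - y') + φ y' := by
    rw [hρ x]; exact csInf_le (hbdd x) ⟨y', hy', rfl⟩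
  have h3 : ρ z ≤ gauge K (z - y) + φ y := by
    rw [hρ z]; exact csInf_le (hbdd z) ⟨y, hy, rfl⟩
  have hxz : x - z = t • (x - y) := by rw [hz]; module
  have hzy : z - y = (1 - t) • (x - y) := by rw [hz]; module
  have hgxz : gauge K (x - z) = t * gauge K (x - y) := by
    rw [hxz, gauge_smul_of_nonneg ht.le, smul_eq_mul]
  have hgzy : gauge K (z - y) = (1 - t) * gauge K (x - y) := by
    rw [hzy, gauge_smul_of_nonneg (by linarith : (0:ℝ) ≤ 1 - t), smul_eq_mul]
  have h2 : gauge K (x - y') ≤ gauge K (x - z) + gauge K (z - y') := by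
    have := gauge_add_le hKconv habs (x - z) (z - y')
    rwa [show x - z + (z - y') = x - y' by abel] at this
  have h4 : gauge K (x - z) + gauge K (z - y) = gauge K (x - y) := by
    rw [hgxz, hgzy]; ring
  have E1 : gauge K (x - y') = gauge K (x - z) + gauge K (z - y') := by linarith
  have E2 : gauge K (z - y') + φ y' = gauge K (z - y) + φ y := by linarith
  -- obtain proportionality from strict convexity
  have hxzne : x - z ≠ 0 := by
    rw [hxz]; exact smul_ne_zero (ne_of_gt ht) hxysub
  obtain ⟨c, hc0, hcz⟩ : ∃ c : ℝ, 0 ≤ c ∧ z - y' = c • (x - z) := by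
    by_cases hA : ∃ c : ℝ, 0 ≤ c ∧ z - y' = c • (x - z)
    · exact hA
    by_cases hB : ∃ c : ℝ, 0 ≤ c ∧ x - z = c • (z - y')
    · obtain ⟨c, hc0, hc⟩ := hB
      have hcne : c ≠ 0 := by
        intro h; rw [h, zero_smul] at hc; exact hxzne hc
      refine ⟨c⁻¹, inv_nonneg.mpr hc0, ?_⟩
      rw [hc, smul_smul, inv_mul_cancel₀ hcne, one_smul]
    · push_neg at hA hB
      have := hstrict (x - z) (z - y')
        (fun c hc h => hB c hc h) (fun c hc h => hA c hc h)
      rw [show x - z + (z - y') = x - y' by abel] at this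
      linarith [E1]
  -- y' lies on the line through x and y
  have hzy' : z - y' = (c * t) • (x - y) := by rw [hcz, hxz, smul_smul]
  have hgzy' : gauge K (z - y') = (c * t) * gauge K (x - y) := by
    rw [hzy', gauge_smul_of_nonneg (mul_nonneg hc0 ht.le), smul_eq_mul]
  set r : ℝ := 1 - t - c * t with hr
  have hy'y : y' - y = r • (x - y) := by
    have h5 : y' - y = (z - y) - (z - y') := by abel
    rw [h5, hzy, hzy', ← sub_smul]
  have hφeq : φ y' - φ y = r * gauge K (x - y) := by
    rw [hgzy, hgzy'] at E2; rw [hr]; linarith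
  rcases lt_trichotomy r 0 with hrneg | hrz | hrpos
  · exfalso
    have hyne : y ≠ y' := by
      intro h
      rw [← h, sub_self] at hy'y
      exact (smul_ne_zero (ne_of_lt hrneg) hxysub) hy'y.symm
    have hyy' : y - y' = (-r) • (x - y) := by
      rw [show y - y' = -(y' - y) by abel, hy'y, neg_smul]
    have hgyy' : gauge K (y - y') = (-r) * gauge K (x - y) := by
      rw [hyy', gauge_smul_of_nonneg (by linarith : (0:ℝ) ≤ -r), smul_eq_mul]
    have hlt := (hφ y y' hyne).2
    rw [hgyy'] at hlt
    linarith
  · rw [hrz, zero_smul] at hy'y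
    exact sub_eq_zero.mp hy'y
  · exfalso
    have hyne : y' ≠ y := by
      intro h
      rw [h, sub_self] at hy'y
      exact (smul_ne_zero (ne_of_gt hrpos) hxysub) hy'y.symm
    have hg : gauge K (y' - y) = r * gauge K (x - y) := by
      rw [hy'y, gauge_smul_of_nonneg hrpos.le, smul_eq_mul]
    have := (hφ y' y hyne).2
    rw [hg] at this
    linarith
end

section
/- Let x ∈ U and let y ∈ ∂U be a ρ̄-closest point to x, i.e., ρ̄(x) = γ(y−x) − φ(y), which moreover has least Euclidean distance to x among all such points: |y−x| ≤ |z−x| for every z ∈ ∂U with ρ̄(x) = γ(z−x) − φ(z). Then the half-open segment [x,y[ = {x + t(y−x) : 0 ≤ t < 1} is contained in U. -/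
open RealInnerProductSpace

/-- If y ∈ ∂U is a ρ̄-closest point to x ∈ U of least Euclidean distance to x among
all ρ̄-closest points, then the half-open segment [x,y[ is contained in U. -/
theorem halfOpen_segment_to_least_closest_point_subset (n : ℕ) (hn : 1 ≤ n)
    (K : Set (EuclideanSpace ℝ (Fin n)))
    (hKcomp : IsCompact K) (hKconv : Convex ℝ K)
    (hK0 : (0 : EuclideanSpace ℝ (Fin n)) ∈ interior K)
    (U : Set (EuclideanSpace ℝ (Fin n)))
    (hUopen : IsOpen U) (hUbdd : Bornology.IsBounded U) (hUne : U.Nonempty)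
    (φ : EuclideanSpace ℝ (Fin n) → ℝ)
    (hφ : ∀ x y : EuclideanSpace ℝ (Fin n),
      -gauge K (y - x) ≤ φ x - φ y ∧ φ x - φ y ≤ gauge K (x - y))
    (ρBar : EuclideanSpace ℝ (Fin n) → ℝ)
    (hρBar : ∀ x, ρBar x = sInf ((fun y => gauge K (y - x) - φ y) '' frontier U))
    (x y : EuclideanSpace ℝ (Fin n)) (hx : x ∈ U) (hy : y ∈ frontier U)
    (hclosest : ρBar x = gauge K (y - x) - φ y)
    (hleast : ∀ z ∈ frontier U, ρBar x = gauge K (z - x) - φ z → ‖y - x‖ ≤ ‖z - x‖) :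
    ∀ t : ℝ, 0 ≤ t → t < 1 → x + t • (y - x) ∈ U := by
  intro t ht0 ht1
  by_contra hmem
  set c : ℝ → EuclideanSpace ℝ (Fin n) := fun s => x + s • (y - x) with hc
  have hcont : Continuous c := by
    apply continuous_const.add (continuous_id.smul continuous_const)
  set S : Set ℝ := Set.Icc 0 t ∩ c ⁻¹' Uᶜ with hS
  have hSne : S.Nonempty := ⟨t, ⟨ht0, le_refl t⟩, hmem⟩
  have hSbd : BddBelow S := ⟨0, fun s hs => hs.1.1⟩
  have hclosed : IsClosed S :=
    isClosed_Icc.inter (hUopen.isClosed_compl.preimage hcont)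
  set s₀ : ℝ := sInf S with hs₀
  have hs₀S : s₀ ∈ S := hclosed.csInf_mem hSne hSbd
  have hs₀0 : 0 ≤ s₀ := hs₀S.1.1
  have hs₀t : s₀ ≤ t := hs₀S.1.2
  have hs₀U : c s₀ ∉ U := hs₀S.2
  have hs₀pos : 0 < s₀ := by
    rcases hs₀0.lt_or_eq with h | h
    · exact h
    · exfalso; apply hs₀U; rw [← h]; simpa [hc] using hx
  -- for 0 < s < s₀, c s ∈ U
  have hbefore : ∀ s, s ∈ Set.Ioo 0 s₀ → c s ∈ U := by
    intro s hs
    by_contra hsi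
    have : s ∈ S := ⟨⟨hs.1.le, hs.2.le.trans hs₀t⟩, hsi⟩
    exact absurd (csInf_le hSbd this) (not_le.2 hs.2)
  have hclU : c s₀ ∈ closure U := by
    have htd : Filter.Tendsto c (nhdsWithin s₀ (Set.Iio s₀)) (nhds (c s₀)) :=
      (hcont.tendsto s₀).mono_left nhdsWithin_le_nhds
    refine mem_closure_of_tendsto htd ?_
    filter_upwards [self_mem_nhdsWithin,
      nhdsWithin_le_nhds (Ioi_mem_nhds hs₀pos)] with s hs1 hs2
    exact hbefore s ⟨hs2, hs1⟩
  have hwfr : c s₀ ∈ frontier U := by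
    rw [hUopen.frontier_eq]; exact ⟨hclU, hs₀U⟩
  set w : EuclideanSpace ℝ (Fin n) := c s₀ with hw
  have hwx : w - x = s₀ • (y - x) := by simp [hw, hc]
  have hyw : y - w = (1 - s₀) • (y - x) := by
    simp only [hw, hc]
    rw [sub_smul, one_smul]
    abel
  have hbdd : BddBelow ((fun z => gauge K (z - x) - φ z) '' frontier U) := by
    refine ⟨-φ x, ?_⟩
    rintro _ ⟨z, hz, rfl⟩
    have := (hφ z x).2
    dsimp only
    linarith
  have le1 : ρBar x ≤ gauge K (w - x) - φ w := by
    rw [hρBar x]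
    exact csInf_le hbdd ⟨w, hwfr, rfl⟩
  have le2 : gauge K (w - x) - φ w ≤ ρBar x := by
    rw [hclosest]
    have h1 : gauge K (w - x) = s₀ * gauge K (y - x) := by
      rw [hwx, gauge_smul_of_nonneg hs₀0, smul_eq_mul]
    have h2 : gauge K (y - w) = (1 - s₀) * gauge K (y - x) := by
      rw [hyw, gauge_smul_of_nonneg (by linarith : (0:ℝ) ≤ 1 - s₀), smul_eq_mul]
    have h3 : φ y - φ w ≤ gauge K (y - w) := (hφ y w).2
    have := h2 ▸ h3
    nlinarith [h1, h2, h3]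
  have heq : ρBar x = gauge K (w - x) - φ w := le_antisymm le1 le2
  have hle := hleast w hwfr heq
  have hyx : y ≠ x := by
    intro h
    rw [hUopen.frontier_eq] at hy
    exact hy.2 (h ▸ hx)
  have hnorm : (0:ℝ) < ‖y - x‖ := by
    rw [norm_pos_iff]; exact sub_ne_zero.2 hyx
  have : ‖w - x‖ = s₀ * ‖y - x‖ := by
    rw [hwx, norm_smul, Real.norm_eq_abs, abs_of_nonneg hs₀0]
  rw [this] at hle
  nlinarith
end

section
/- Let u : ℝⁿ → ℝ be continuous on the closure of U and differentiable on U, with γ°(∇u(z)) ≤ 1 for all z ∈ U and u ≥ −ρ̄ on U. Suppose x ∈ U, y ∈ ∂U satisfy ρ̄(x) = γ(y−x) − φ(y), the half-open segment [x,y[ = {x + t(y−x) : 0 ≤ t < 1} is contained in U, u(x) = −ρ̄(x), and u(y) = φ(y). Then u(z) = −ρ̄(z) for every z ∈ [x,y]. -/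
open RealInnerProductSpace

/-- If u is continuous on the closure of U, differentiable on U with γ°(∇u) ≤ 1 and
u ≥ −ρ̄ on U, and u touches the lower obstacle −ρ̄ at a point x ∈ U whose segment
[x,y[ to a ρ̄-closest boundary point y lies in U, with u = φ at y, then u = −ρ̄ on
the whole segment [x,y]. -/
theorem touching_lower_obstacle_along_segment (n : ℕ) (hn : 1 ≤ n)
    (K : Set (EuclideanSpace ℝ (Fin n)))
    (hKcomp : IsCompact K) (hKconv : Convex ℝ K)
    (hK0 : (0 : EuclideanSpace ℝ (Fin n)) ∈ interior K)
    (Kpolar : Set (EuclideanSpace ℝ (Fin n)))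
    (hKpolar : Kpolar = {p : EuclideanSpace ℝ (Fin n) | ∀ q ∈ K, ⟪p, q⟫ ≤ 1})
    (U : Set (EuclideanSpace ℝ (Fin n)))
    (hUopen : IsOpen U) (hUbdd : Bornology.IsBounded U) (hUne : U.Nonempty)
    (φ : EuclideanSpace ℝ (Fin n) → ℝ)
    (hφ : ∀ x y : EuclideanSpace ℝ (Fin n),
      -gauge K (y - x) ≤ φ x - φ y ∧ φ x - φ y ≤ gauge K (x - y))
    (ρBar : EuclideanSpace ℝ (Fin n) → ℝ)
    (hρBar : ∀ x, ρBar x = sInf ((fun y => gauge K (y - x) - φ y) '' frontier U))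
    (u : EuclideanSpace ℝ (Fin n) → ℝ)
    (hucont : ContinuousOn u (closure U))
    (hudiff : ∀ z ∈ U, DifferentiableAt ℝ u z)
    (hugrad : ∀ z ∈ U, gauge Kpolar (gradient u z) ≤ 1)
    (hulow : ∀ z ∈ U, -ρBar z ≤ u z)
    (x y : EuclideanSpace ℝ (Fin n)) (hx : x ∈ U) (hy : y ∈ frontier U)
    (hclosest : ρBar x = gauge K (y - x) - φ y)
    (hseg : ∀ t : ℝ, 0 ≤ t → t < 1 → x + t • (y - x) ∈ U)
    (hux : u x = -ρBar x) (huy : u y = φ y) :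
    ∀ t : ℝ, t ∈ Set.Icc (0 : ℝ) 1 →
      u (x + t • (y - x)) = -ρBar (x + t • (y - x)) := by
  have habs : Absorbent ℝ K := absorbent_nhds_zero (mem_interior_iff_mem_nhds.mp hK0)
  -- Kpolar is absorbent
  obtain ⟨R, hR⟩ := hKcomp.isBounded.exists_norm_le
  have hR0 : (0:ℝ) < R + 1 := by
    have := norm_nonneg (Classical.choice (⟨(0:EuclideanSpace ℝ (Fin n))⟩ : Nonempty _))
    nlinarith [hR 0 (interior_subset hK0), norm_nonneg (0:EuclideanSpace ℝ (Fin n))]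
  have hballP : Metric.ball (0 : EuclideanSpace ℝ (Fin n)) ((R+1)⁻¹) ⊆ Kpolar := by
    intro p hp
    rw [hKpolar]
    intro q hq
    have h1 : ⟪p, q⟫ ≤ ‖p‖ * ‖q‖ := real_inner_le_norm p q
    have h2 : ‖p‖ < (R+1)⁻¹ := by simpa using hp
    have h3 : ‖q‖ ≤ R := hR q hq
    have : ‖p‖ * ‖q‖ ≤ (R+1)⁻¹ * (R+1) := by
      apply mul_le_mul h2.le (by linarith) (norm_nonneg _) (by positivity)
    rw [inv_mul_cancel₀ (ne_of_gt hR0)] at this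
    linarith
  have habsP : Absorbent ℝ Kpolar :=
    absorbent_nhds_zero (Filter.mem_of_superset
      (Metric.ball_mem_nhds _ (by positivity)) hballP)
  -- duality : if gauge Kpolar p ≤ 1 then ⟪p, v⟫ ≤ gauge K v
  have hkey : ∀ p : EuclideanSpace ℝ (Fin n), gauge Kpolar p ≤ 1 →
      ∀ v, ⟪p, v⟫ ≤ gauge K v := by
    intro p hp v
    have hpol : ∀ q ∈ K, ⟪p, q⟫ ≤ 1 := by
      intro q hq
      refine le_of_forall_pos_le_add ?_
      intro ε hε
      obtain ⟨b, hb0, hb1, hmem⟩ := exists_lt_of_gauge_lt habsP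
        (lt_of_le_of_lt hp (by linarith : (1:ℝ) < 1 + ε))
      obtain ⟨p', hp', rfl⟩ := hmem
      rw [real_inner_smul_left]
      rw [hKpolar] at hp'
      have := hp' q hq
      nlinarith
    refine le_of_forall_pos_le_add ?_
    intro ε hε
    obtain ⟨b, hb0, hb1, hmem⟩ := exists_lt_of_gauge_lt habs
      (lt_add_of_pos_right (gauge K v) hε)
    obtain ⟨q, hq, rfl⟩ := hmem
    rw [real_inner_smul_right]
    have := hpol q hq
    nlinarith
  -- basic facts about ρBar
  have hbdd : ∀ x' : EuclideanSpace ℝ (Fin n),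
      BddBelow ((fun w => gauge K (w - x') - φ w) '' frontier U) := by
    intro x'
    refine ⟨-φ x', ?_⟩
    rintro r ⟨w, hw, rfl⟩
    have := (hφ w x').2
    simp only [lowerBounds, Set.mem_setOf_eq]
    linarith
  have hρle : ∀ (x' w : EuclideanSpace ℝ (Fin n)), w ∈ frontier U →
      ρBar x' ≤ gauge K (w - x') - φ w := by
    intro x' w hw
    rw [hρBar]
    exact csInf_le (hbdd x') ⟨w, hw, rfl⟩
  set C := gauge K (y - x) with hC
  have hρformula : ∀ t : ℝ, 0 ≤ t → t ≤ 1 →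
      ρBar (x + t • (y - x)) = ρBar x - t * C := by
    intro t ht0 ht1
    apply le_antisymm
    · have h1 := hρle (x + t • (y - x)) y hy
      have h2 : y - (x + t • (y - x)) = (1 - t) • (y - x) := by module
      rw [h2, gauge_smul_of_nonneg (by linarith : (0:ℝ) ≤ 1 - t), smul_eq_mul] at h1
      rw [hclosest]
      linarith
    · rw [hρBar (x + t • (y - x))]
      apply le_csInf (Set.Nonempty.image _ ⟨y, hy⟩)
      rintro r ⟨w, hw, rfl⟩
      have htri := gauge_add_le hKconv habs (w - (x + t • (y - x))) (t • (y - x))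
      have heq : (w - (x + t • (y - x))) + t • (y - x) = w - x := by module
      rw [heq] at htri
      have h3 : gauge K (t • (y - x)) = t * C := by
        rw [gauge_smul_of_nonneg ht0, smul_eq_mul]
      have h4 := hρle x w hw
      simp only []
      linarith
  -- the segment lies in the closure of U
  have hzt : ∀ t : ℝ, 0 ≤ t → t ≤ 1 → x + t • (y - x) ∈ closure U := by
    intro t ht0 ht1
    rcases lt_or_eq_of_le ht1 with h | h
    · exact subset_closure (hseg t ht0 h)
    · have h1 : x + t • (y - x) = y := by rw [h, one_smul]; abel
      rw [h1]
      exact frontier_subset_closure hy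
  -- the auxiliary function g
  set g : ℝ → ℝ := fun t => t * C - u (x + t • (y - x)) with hg
  have hgc : ContinuousOn g (Set.Icc (0:ℝ) 1) := by
    apply ContinuousOn.sub
    · exact (continuous_id.mul continuous_const).continuousOn
    · apply hucont.comp
      · exact (continuous_const.add (continuous_id.smul continuous_const)).continuousOn
      · intro t ht
        exact hzt t ht.1 ht.2
  have hderiv : ∀ t ∈ Set.Ioo (0:ℝ) 1,
      HasDerivAt g (C - ⟪gradient u (x + t • (y - x)), y - x⟫) t := by
    intro t ht
    have hzU : x + t • (y - x) ∈ U := hseg t ht.1.le ht.2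
    have hline : HasDerivAt (fun s : ℝ => x + s • (y - x)) (y - x) t := by
      simpa using ((hasDerivAt_id t).smul_const (y - x)).const_add x
    have hgrad := ((hudiff _ hzU).hasGradientAt).hasFDerivAt
    have hcomp := hgrad.comp_hasDerivAt t hline
    have hmul : HasDerivAt (fun s : ℝ => s * C) C t := hasDerivAt_mul_const C
    have := hmul.sub hcomp
    simp [InnerProductSpace.toDual_apply_apply] at this ⊢; exact this
  have hmono : MonotoneOn g (Set.Icc (0:ℝ) 1) := by
    apply monotoneOn_of_deriv_nonneg (convex_Icc 0 1) hgc
    · intro t ht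
      rw [interior_Icc] at ht
      exact ((hderiv t ht).differentiableAt).differentiableWithinAt
    · intro t ht
      rw [interior_Icc] at ht
      rw [(hderiv t ht).deriv]
      have hzU : x + t • (y - x) ∈ U := hseg t ht.1.le ht.2
      have := hkey (gradient u (x + t • (y - x))) (hugrad _ hzU) (y - x)
      linarith
  have hy1 : x + (1:ℝ) • (y - x) = y := by rw [one_smul]; abel
  have hg1 : g 1 = ρBar x := by
    simp only [hg, hy1, huy, hclosest, one_mul]
  have hg0 : g 0 = ρBar x := by
    simp only [hg, zero_smul, add_zero, hux, zero_mul, zero_sub, neg_neg]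
  intro t ht
  have h1 : g 0 ≤ g t := hmono (Set.left_mem_Icc.mpr zero_le_one) ht ht.1
  have h2 : g t ≤ g 1 := hmono ht (Set.right_mem_Icc.mpr zero_le_one) ht.2
  have hgt : g t = ρBar x := by linarith
  have hut : u (x + t • (y - x)) = t * C - ρBar x := by
    simp only [hg] at hgt
    linarith
  rw [hut, hρformula t ht.1 ht.2]
  ring
end

section
/- Let u : ℝⁿ → ℝ be continuous on the closure of U and differentiable on U, with γ°(∇u(z)) ≤ 1 for all z ∈ U and u ≤ ρ on U. Suppose x ∈ U, y ∈ ∂U satisfy ρ(x) = γ(x−y) + φ(y), the half-open segment [x,y[ = {x + t(y−x) : 0 ≤ t < 1} is contained in U, u(x) = ρ(x), and u(y) = φ(y). Then u(z) = ρ(z) for every z ∈ [x,y]. -/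
open RealInnerProductSpace

/-- If u is continuous on the closure of U, differentiable on U with γ°(∇u) ≤ 1 and
u ≤ ρ on U, and u touches the upper obstacle ρ at a point x ∈ U whose segment
[x,y[ to a ρ-closest boundary point y lies in U, with u = φ at y, then u = ρ on
the whole segment [x,y]. -/
theorem touching_upper_obstacle_along_segment (n : ℕ) (hn : 1 ≤ n)
    (K : Set (EuclideanSpace ℝ (Fin n)))
    (hKcomp : IsCompact K) (hKconv : Convex ℝ K)
    (hK0 : (0 : EuclideanSpace ℝ (Fin n)) ∈ interior K)
    (Kpolar : Set (EuclideanSpace ℝ (Fin n)))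
    (hKpolar : Kpolar = {p : EuclideanSpace ℝ (Fin n) | ∀ q ∈ K, ⟪p, q⟫ ≤ 1})
    (U : Set (EuclideanSpace ℝ (Fin n)))
    (hUopen : IsOpen U) (hUbdd : Bornology.IsBounded U) (hUne : U.Nonempty)
    (φ : EuclideanSpace ℝ (Fin n) → ℝ)
    (hφ : ∀ x y : EuclideanSpace ℝ (Fin n),
      -gauge K (y - x) ≤ φ x - φ y ∧ φ x - φ y ≤ gauge K (x - y))
    (ρ : EuclideanSpace ℝ (Fin n) → ℝ)
    (hρ : ∀ x, ρ x = sInf ((fun y => gauge K (x - y) + φ y) '' frontier U))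
    (u : EuclideanSpace ℝ (Fin n) → ℝ)
    (hucont : ContinuousOn u (closure U))
    (hudiff : ∀ z ∈ U, DifferentiableAt ℝ u z)
    (hugrad : ∀ z ∈ U, gauge Kpolar (gradient u z) ≤ 1)
    (huup : ∀ z ∈ U, u z ≤ ρ z)
    (x y : EuclideanSpace ℝ (Fin n)) (hx : x ∈ U) (hy : y ∈ frontier U)
    (hclosest : ρ x = gauge K (x - y) + φ y)
    (hseg : ∀ t : ℝ, 0 ≤ t → t < 1 → x + t • (y - x) ∈ U)
    (hux : u x = ρ x) (huy : u y = φ y) :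
    ∀ t : ℝ, t ∈ Set.Icc (0 : ℝ) 1 →
      u (x + t • (y - x)) = ρ (x + t • (y - x)) := by
  -- absorbency of K
  have habs : Absorbent ℝ K := absorbent_nhds_zero (mem_interior_iff_mem_nhds.1 hK0)
  -- absorbency of Kpolar
  obtain ⟨R, hR0, hKR⟩ := hKcomp.isBounded.subset_closedBall_lt 0 0
  have hball : Metric.ball (0 : EuclideanSpace ℝ (Fin n)) R⁻¹ ⊆ Kpolar := by
    intro p hp
    rw [hKpolar]
    intro q hq
    have hnp : ‖p‖ < R⁻¹ := by simpa using hp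
    have hnq : ‖q‖ ≤ R := by simpa using hKR hq
    calc ⟪p, q⟫ ≤ ‖p‖ * ‖q‖ := real_inner_le_norm p q
      _ ≤ R⁻¹ * R := by
          exact mul_le_mul hnp.le hnq (norm_nonneg _) (inv_nonneg.2 hR0.le)
      _ = 1 := inv_mul_cancel₀ hR0.ne'
  have habsp : Absorbent ℝ Kpolar :=
    absorbent_nhds_zero (Filter.mem_of_superset (Metric.ball_mem_nhds 0 (inv_pos.2 hR0)) hball)
  -- key duality inequality
  have inner_le : ∀ p v : EuclideanSpace ℝ (Fin n),
      gauge Kpolar p ≤ 1 → ⟪p, v⟫ ≤ gauge K v := by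
    intro p v hp
    refine le_of_forall_gt_imp_ge_of_dense fun r hr => ?_
    obtain ⟨b, hb0, hbr, hvb⟩ := exists_lt_of_gauge_lt habs hr
    have key : ∀ s : ℝ, 1 < s → ⟪p, v⟫ ≤ b * s := by
      intro s hs
      obtain ⟨c, hc0, hcs, hpc⟩ := exists_lt_of_gauge_lt habsp (lt_of_le_of_lt hp hs)
      obtain ⟨v', hv'K, rfl⟩ := hvb
      obtain ⟨p', hp'K, rfl⟩ := hpc
      have hpv : ⟪p', v'⟫ ≤ 1 := by
        rw [hKpolar] at hp'K; exact hp'K v' hv'K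
      have : ⟪c • p', b • v'⟫ = c * (b * ⟪p', v'⟫) := by
        rw [real_inner_smul_left, real_inner_smul_right]
      rw [this]
      calc c * (b * ⟪p', v'⟫) ≤ c * (b * 1) :=
            mul_le_mul_of_nonneg_left (mul_le_mul_of_nonneg_left hpv hb0.le) hc0.le
        _ = b * c := by ring
        _ ≤ b * s := mul_le_mul_of_nonneg_left hcs.le hb0.le
    have hbv : ⟪p, v⟫ ≤ b := by
      refine le_of_forall_gt_imp_ge_of_dense fun w hw => ?_
      have h1 : (1 : ℝ) < w / b := (one_lt_div hb0).2 hw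
      have := key (w / b) h1
      rwa [mul_div_cancel₀ _ hb0.ne'] at this
    exact hbv.trans hbr.le
  -- bounds on ρ
  have hbdd : ∀ z : EuclideanSpace ℝ (Fin n),
      BddBelow ((fun w => gauge K (z - w) + φ w) '' frontier U) := by
    intro z
    refine ⟨φ z, ?_⟩
    rintro a ⟨w, hw, rfl⟩
    have := (hφ z w).2
    dsimp only
    linarith
  have hρ_le : ∀ z : EuclideanSpace ℝ (Fin n), ∀ w ∈ frontier U,
      ρ z ≤ gauge K (z - w) + φ w := by
    intro z w hw
    rw [hρ]
    exact csInf_le (hbdd z) ⟨w, hw, rfl⟩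
  have hρ_ge : ∀ z : EuclideanSpace ℝ (Fin n), φ z ≤ ρ z := by
    intro z
    rw [hρ]
    refine le_csInf ⟨_, ⟨y, hy, rfl⟩⟩ ?_
    rintro a ⟨w, hw, rfl⟩
    have := (hφ z w).2
    dsimp only
    linarith
  intro t ⟨ht0, ht1⟩
  rcases eq_or_lt_of_le ht1 with h1 | htlt
  · -- t = 1 : the point is y
    subst h1
    have hzy : x + (1 : ℝ) • (y - x) = y := by
      simp
    rw [hzy, huy]
    refine le_antisymm (hρ_ge y) ?_
    have := hρ_le y y hy
    simpa [gauge_zero] using this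
  · -- t < 1
    set z := x + t • (y - x) with hz
    have hzU : z ∈ U := hseg t ht0 htlt
    set g := gauge K (x - y) with hg
    have hxz : x - z = t • (x - y) := by
      rw [hz]; module
    have hzy : z - y = (1 - t) • (x - y) := by
      rw [hz]; module
    have hgxz : gauge K (x - z) = t * g := by
      rw [hxz, gauge_smul_of_nonneg ht0, smul_eq_mul]
    have hgzy : gauge K (z - y) = (1 - t) * g := by
      rw [hzy, gauge_smul_of_nonneg (by linarith : (0:ℝ) ≤ 1 - t), smul_eq_mul]
    -- mean value bound : u x ≤ u z + t * g
    set c : ℝ → EuclideanSpace ℝ (Fin n) := fun s => x + s • (y - x) with hc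
    have hcU : ∀ s ∈ Set.Icc (0 : ℝ) t, c s ∈ U := fun s hs =>
      hseg s hs.1 (lt_of_le_of_lt hs.2 htlt)
    have hcderiv : ∀ s : ℝ, HasDerivAt c (y - x) s := by
      intro s
      have : HasDerivAt (fun s : ℝ => s • (y - x)) ((1 : ℝ) • (y - x)) s :=
        (hasDerivAt_id s).smul_const (y - x)
      simpa [hc] using this.const_add x
    set F : ℝ → ℝ := fun s => u (c s) + s * g with hFdef
    have hFd : ∀ s : ℝ, c s ∈ U →
        HasDerivAt F (⟪gradient u (c s), y - x⟫ + g) s := by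
      intro s hsU
      have hgr := (hudiff _ hsU).hasGradientAt
      rw [hasGradientAt_iff_hasFDerivAt] at hgr
      have h1 : HasDerivAt (fun s => u (c s))
          ((InnerProductSpace.toDual ℝ _ (gradient u (c s))) (y - x)) s :=
        hgr.comp_hasDerivAt s (hcderiv s)
      rw [InnerProductSpace.toDual_apply_apply] at h1
      exact h1.add (hasDerivAt_mul_const g)
    have hFcont : ContinuousOn F (Set.Icc (0 : ℝ) t) := by
      refine ContinuousOn.add ?_ ((continuous_id.mul continuous_const).continuousOn)
      intro s hs
      exact (((hudiff _ (hcU s hs)).continuousAt.comp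
        (hcderiv s).differentiableAt.continuousAt)).continuousWithinAt
    have hmono : MonotoneOn F (Set.Icc (0 : ℝ) t) := by
      refine monotoneOn_of_deriv_nonneg (convex_Icc 0 t) hFcont ?_ ?_
      · intro s hs
        exact (hFd s (hcU s (interior_subset hs))).differentiableAt.differentiableWithinAt
      · intro s hs
        have hsU : c s ∈ U := hcU s (interior_subset hs)
        rw [(hFd s hsU).deriv]
        have h2 := inner_le (gradient u (c s)) (x - y) (hugrad _ hsU)
        have h3 : ⟪gradient u (c s), y - x⟫ = -⟪gradient u (c s), x - y⟫ := by
          rw [← inner_neg_right, neg_sub]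
        rw [h3]
        rw [← hg] at h2
        linarith
    have hF0 : F 0 = u x := by simp [hFdef, hc]
    have hFt : F t = u z + t * g := by simp [hFdef, hc, hz]
    have hAB : u x ≤ u z + t * g := by
      have := hmono (Set.left_mem_Icc.2 ht0) (Set.right_mem_Icc.2 ht0) ht0
      rwa [hF0, hFt] at this
    have h2 : ρ z ≤ (1 - t) * g + φ y := by
      rw [← hgzy]; exact hρ_le z y hy
    have h3 : u z ≤ ρ z := huup z hzU
    have hx1 : u x = g + φ y := by rw [hux, hclosest]
    linarith
end

section
/- Monotonicity of second derivatives of solutions of Hamilton–Jacobi equations along characteristics: let Ω ⊆ ℝⁿ be open, let v : ℝⁿ → ℝ be three times continuously differentiable on Ω, and let H̃ : ℝⁿ → ℝ be convex and twice continuously differentiable, with H̃(∇v(x)) = 0 for all x ∈ Ω. Let S > 0 and let x : [0,S] → ℝⁿ be differentiable with x(s) ∈ Ω and x′(s) = ∇H̃(∇v(x(s))) for all s ∈ [0,S]. Then for every ξ ∈ ℝⁿ the function q(s) := ⟨D²v(x(s)) ξ, ξ⟩ is nonincreasing on [0,S]; indeed q′(s) = −⟨D²H̃(∇v(x(s)))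 (D²v(x(s)) ξ), D²v(x(s)) ξ⟩ ≤ 0. -/
open RealInnerProductSpace Topology

section aux
variable {E : Type*} [NormedAddCommGroup E] [InnerProductSpace ℝ E] [CompleteSpace E]

lemma aux_inner_gradient (f : E → ℝ) (p w : E) : ⟪gradient f p, w⟫ = fderiv ℝ f p w :=
  InnerProductSpace.toDual_symm_apply

lemma aux_monotone_deriv_nonneg {φ : ℝ → ℝ} {c t : ℝ} (hφ : Monotone φ)
    (h : HasDerivAt φ c t) : 0 ≤ c := by
  have h1 : Filter.Tendsto (slope φ t) (𝓝[>] t) (𝓝 c) :=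
    (hasDerivAt_iff_tendsto_slope.1 h).mono_left
      (nhdsWithin_mono _ (fun u hu => ne_of_gt hu))
  refine ge_of_tendsto h1 ?_
  filter_upwards [self_mem_nhdsWithin] with u hu
  have hu' : t < u := hu
  rw [slope_def_field]
  exact div_nonneg (by linarith [hφ hu'.le]) (by linarith)

lemma aux_hessian_nonneg {H : E → ℝ} (hH : ContDiff ℝ 2 H)
    (hconv : ConvexOn ℝ Set.univ H) (p y : E) :
    0 ≤ ⟪fderiv ℝ (gradient H) p y, y⟫ := by
  have hH1 : Differentiable ℝ H := hH.differentiable (by norm_num)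
  have hgrad : ContDiff ℝ 1 (gradient H) := by
    have h1 : ContDiff ℝ 1 (fderiv ℝ H) := hH.fderiv_right (m := 1) (by norm_num)
    exact ((InnerProductSpace.toDual ℝ E).symm.contDiff).comp h1
  set c : ℝ → E := fun t => t • y + p with hc
  have hcd : ∀ t : ℝ, HasDerivAt c y t := fun t => by
    simpa [hc] using ((hasDerivAt_id t).smul_const y).add_const p
  set φ : ℝ → ℝ := fun t => ⟪gradient H (c t), y⟫ with hφdef
  have hgdd : ∀ t : ℝ, HasDerivAt (H ∘ c) (φ t) t := fun t => by
    have := (hH1 (c t)).hasFDerivAt.comp_hasDerivAt t (hcd t)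
    simpa [hφdef, aux_inner_gradient] using this
  have hgc : ConvexOn ℝ Set.univ (H ∘ c) := by
    have := hconv.comp_affineMap (AffineMap.lineMap p (p + y) : ℝ →ᵃ[ℝ] E)
    have he : (H ∘ (AffineMap.lineMap p (p + y) : ℝ →ᵃ[ℝ] E)) = H ∘ c := by
      funext t
      simp [AffineMap.lineMap_apply, hc]
    rw [he] at this
    simpa using this
  have hφmono : Monotone φ := by
    intro a b hab
    rcases eq_or_lt_of_le hab with rfl | hab
    · exact le_rfl
    · have h1 := hgc.le_slope_of_hasDerivAt (Set.mem_univ a) (Set.mem_univ b) hab (hgdd a)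
      have h2 := hgc.slope_le_of_hasDerivAt (Set.mem_univ a) (Set.mem_univ b) hab (hgdd b)
      exact h1.trans h2
  have hφd : HasDerivAt φ ⟪fderiv ℝ (gradient H) p y, y⟫ 0 := by
    have hgp : HasFDerivAt (gradient H) (fderiv ℝ (gradient H) p) p :=
      ((hgrad.differentiable one_ne_zero) p).hasFDerivAt
    have h2 : HasFDerivAt (fun z => ⟪y, gradient H z⟫)
        ((innerSL ℝ y).comp (fderiv ℝ (gradient H) p)) p :=
      (innerSL ℝ y).hasFDerivAt.comp p hgp
    have hc0 : c 0 = p := by simp [hc]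
    rw [← hc0] at h2
    have h3 := h2.comp_hasDerivAt 0 (hcd 0)
    simp only [Function.comp_def, hc0, ContinuousLinearMap.coe_comp', innerSL_apply_apply] at h3
    have he : φ = (fun t => ⟪y, gradient H (c t)⟫) := by
      funext t; rw [hφdef]; exact real_inner_comm _ _
    rw [he, real_inner_comm]
    exact h3
  exact aux_monotone_deriv_nonneg hφmono hφd

end aux

/-- Local abbreviation used in the proof below. -/
abbrev EucAux (n : ℕ) := EuclideanSpace ℝ (Fin n)


/-- Monotonicity of the second derivative of solutions to Hamilton–Jacobi equations
along characteristics: if v is C³ on an open set Ω, H̃ is convex and C², H̃(∇v) = 0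
on Ω, and x(s) is a characteristic curve (x′ = ∇H̃(∇v(x))), then for every ξ the
function q(s) = ⟨D²v(x(s))ξ, ξ⟩ is nonincreasing on [0,S]; indeed its derivative is
q′(s) = −⟨D²H̃(∇v(x(s))) (D²v(x(s))ξ), D²v(x(s))ξ⟩ ≤ 0. -/
theorem second_derivative_monotone_along_characteristics (n : ℕ) (hn : 1 ≤ n)
    (Ω : Set (EuclideanSpace ℝ (Fin n))) (hΩ : IsOpen Ω)
    (v Htilde : EuclideanSpace ℝ (Fin n) → ℝ)
    (hv : ContDiffOn ℝ 3 v Ω)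
    (hH : ContDiff ℝ 2 Htilde)
    (hHconv : ConvexOn ℝ Set.univ Htilde)
    (hHJ : ∀ z ∈ Ω, Htilde (gradient v z) = 0)
    (S : ℝ) (hS : 0 < S)
    (x : ℝ → EuclideanSpace ℝ (Fin n))
    (hxΩ : ∀ s ∈ Set.Icc (0 : ℝ) S, x s ∈ Ω)
    (hx' : ∀ s ∈ Set.Icc (0 : ℝ) S,
      HasDerivWithinAt x (gradient Htilde (gradient v (x s))) (Set.Icc (0 : ℝ) S) s)
    (ξ : EuclideanSpace ℝ (Fin n)) :
    AntitoneOn (fun s => ⟪fderiv ℝ (gradient v) (x s) ξ, ξ⟫) (Set.Icc (0 : ℝ) S) ∧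
    ∀ s ∈ Set.Icc (0 : ℝ) S,
      HasDerivWithinAt (fun s => ⟪fderiv ℝ (gradient v) (x s) ξ, ξ⟫)
        (-⟪fderiv ℝ (gradient Htilde) (gradient v (x s))
              (fderiv ℝ (gradient v) (x s) ξ),
            fderiv ℝ (gradient v) (x s) ξ⟫)
        (Set.Icc (0 : ℝ) S) s := by
  have hEdef : True := trivial
  -- smoothness of the gradient of v on Ω
  have hfv2 : ContDiffOn ℝ 2 (fderiv ℝ v) Ω := hv.fderiv_of_isOpen (m := 2) hΩ (by norm_num)
  have hu : ContDiffOn ℝ 2 (gradient v) Ω :=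
    ((InnerProductSpace.toDual ℝ (EucAux n)).symm.contDiff).comp_contDiffOn hfv2
  have hB : ContDiffOn ℝ 1 (fderiv ℝ (gradient v)) Ω := hu.fderiv_of_isOpen (m := 1) hΩ (by norm_num)
  have hgradH : ContDiff ℝ 1 (gradient Htilde) := by
    have h1 : ContDiff ℝ 1 (fderiv ℝ Htilde) := hH.fderiv_right (by norm_num)
    exact ((InnerProductSpace.toDual ℝ (EucAux n)).symm.contDiff).comp h1
  have hud : ∀ z ∈ Ω, DifferentiableAt ℝ (gradient v) z := fun z hz =>
    ((hu.contDiffAt (hΩ.mem_nhds hz)).differentiableAt (by norm_num))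
  have hBd : ∀ z ∈ Ω, DifferentiableAt ℝ (fderiv ℝ (gradient v)) z := fun z hz =>
    ((hB.contDiffAt (hΩ.mem_nhds hz)).differentiableAt (by norm_num))
  -- derivative of z ↦ ⟪b, B z a⟫
  have helper : ∀ z ∈ Ω, ∀ (a b : (EucAux n)),
      HasFDerivAt (fun z => ⟪b, fderiv ℝ (gradient v) z a⟫)
        (((innerSL ℝ b).comp (ContinuousLinearMap.apply ℝ (EucAux n) a)).comp
          (fderiv ℝ (fderiv ℝ (gradient v)) z)) z := by
    intro z hz a b
    exact ((innerSL ℝ b).comp (ContinuousLinearMap.apply ℝ (EucAux n) a)).hasFDerivAt.comp z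
      (hBd z hz).hasFDerivAt
  -- symmetry of the Hessian of v
  have hsymmB : ∀ z ∈ Ω, ∀ a b : (EucAux n),
      ⟪fderiv ℝ (gradient v) z a, b⟫ = ⟪fderiv ℝ (gradient v) z b, a⟫ := by
    have key : ∀ z ∈ Ω, ∀ a b : (EucAux n),
        ⟪b, fderiv ℝ (gradient v) z a⟫ = fderiv ℝ (fderiv ℝ v) z a b := by
      intro z hz a b
      have hvd2 : DifferentiableAt ℝ (fderiv ℝ v) z :=
        (hfv2.contDiffAt (hΩ.mem_nhds hz)).differentiableAt (by norm_num)
      have e1 : HasFDerivAt (fun z => ⟪b, gradient v z⟫)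
          ((innerSL ℝ b).comp (fderiv ℝ (gradient v) z)) z :=
        (innerSL ℝ b).hasFDerivAt.comp z (hud z hz).hasFDerivAt
      have e2 : HasFDerivAt (fun z => fderiv ℝ v z b)
          ((ContinuousLinearMap.apply ℝ ℝ b).comp (fderiv ℝ (fderiv ℝ v) z)) z :=
        (ContinuousLinearMap.apply ℝ ℝ b).hasFDerivAt.comp z hvd2.hasFDerivAt
      have hfe : (fun z => ⟪b, gradient v z⟫) = (fun z => fderiv ℝ v z b) := by
        funext y
        rw [real_inner_comm, aux_inner_gradient]
      rw [hfe] at e1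
      have := e1.unique e2
      have happ := congrArg (fun (L : (EucAux n) →L[ℝ] ℝ) => L a) this
      simpa using happ
    intro z hz a b
    have hsym := (hv.contDiffAt (hΩ.mem_nhds hz)).isSymmSndFDerivAt (by norm_num)
    rw [real_inner_comm, key z hz a b, real_inner_comm, key z hz b a]
    exact hsym a b
  -- symmetry of third derivative in the first two slots
  have hsymm3 : ∀ z ∈ Ω, ∀ a b : (EucAux n),
      fderiv ℝ (fderiv ℝ (gradient v)) z a b = fderiv ℝ (fderiv ℝ (gradient v)) z b a :=
    fun z hz => (hu.contDiffAt (hΩ.mem_nhds hz)).isSymmSndFDerivAt (by norm_num)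
  -- symmetry in the last two slots
  have hswap : ∀ z ∈ Ω, ∀ w a b : (EucAux n),
      ⟪fderiv ℝ (fderiv ℝ (gradient v)) z w a, b⟫
        = ⟪fderiv ℝ (fderiv ℝ (gradient v)) z w b, a⟫ := by
    intro z hz w a b
    have h1 := helper z hz a b
    have h2 := helper z hz b a
    have h12 := h1.sub h2
    have hΦ0 : (fun z => ⟪b, fderiv ℝ (gradient v) z a⟫ - ⟪a, fderiv ℝ (gradient v) z b⟫)
        =ᶠ[𝓝 z] fun _ => (0 : ℝ) := by
      filter_upwards [hΩ.mem_nhds hz] with y hy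
      have h' : ⟪b, fderiv ℝ (gradient v) y a⟫ = ⟪a, fderiv ℝ (gradient v) y b⟫ :=
        (real_inner_comm _ b).trans ((hsymmB y hy a b).trans (real_inner_comm a _))
      simp [h']
    have hfd0 : fderiv ℝ (fun z => ⟪b, fderiv ℝ (gradient v) z a⟫
        - ⟪a, fderiv ℝ (gradient v) z b⟫) z = 0 := by
      rw [hΦ0.fderiv_eq]
      exact fderiv_const_apply 0
    have := h12.fderiv
    rw [show ((fun z => ⟪b, fderiv ℝ (gradient v) z a⟫) - (fun z => ⟪a, fderiv ℝ (gradient v) z b⟫)) = (fun z => ⟪b, fderiv ℝ (gradient v) z a⟫ - ⟪a, fderiv ℝ (gradient v) z b⟫) from rfl, hfd0] at this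
    have happ := congrArg (fun (L : (EucAux n) →L[ℝ] ℝ) => L w) this.symm
    simp only [ContinuousLinearMap.zero_apply, ContinuousLinearMap.sub_apply,
      ContinuousLinearMap.coe_comp', Function.comp_apply, innerSL_apply_apply,
      ContinuousLinearMap.apply_apply] at happ
    have : ⟪b, fderiv ℝ (fderiv ℝ (gradient v)) z w a⟫
        = ⟪a, fderiv ℝ (fderiv ℝ (gradient v)) z w b⟫ := by linarith
    rw [real_inner_comm _ b, real_inner_comm _ a] at this
    exact this
  -- first differentiated Hamilton–Jacobi identity
  have hHJ1 : ∀ z ∈ Ω, ∀ w : (EucAux n),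
      ⟪gradient Htilde (gradient v z), fderiv ℝ (gradient v) z w⟫ = 0 := by
    intro z hz w
    have hHd : HasFDerivAt Htilde (fderiv ℝ Htilde (gradient v z)) (gradient v z) :=
      (hH.differentiable (by norm_num) _).hasFDerivAt
    have hcomp : HasFDerivAt (fun z => Htilde (gradient v z))
        ((fderiv ℝ Htilde (gradient v z)).comp (fderiv ℝ (gradient v) z)) z :=
      hHd.comp z (hud z hz).hasFDerivAt
    have h0 : (fun z => Htilde (gradient v z)) =ᶠ[𝓝 z] fun _ => (0 : ℝ) := by
      filter_upwards [hΩ.mem_nhds hz] with y hy using hHJ y hy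
    have hfd0 : fderiv ℝ (fun z => Htilde (gradient v z)) z = 0 := by
      rw [h0.fderiv_eq]; exact fderiv_const_apply 0
    have := hcomp.fderiv
    rw [hfd0] at this
    have happ := congrArg (fun (L : (EucAux n) →L[ℝ] ℝ) => L w) this.symm
    simp only [ContinuousLinearMap.zero_apply, ContinuousLinearMap.coe_comp',
      Function.comp_apply] at happ
    rw [aux_inner_gradient]
    exact happ
  -- second differentiated Hamilton–Jacobi identity
  have hHJ2 : ∀ z ∈ Ω, ∀ w : (EucAux n),
      ⟪gradient Htilde (gradient v z), fderiv ℝ (fderiv ℝ (gradient v)) z w ξ⟫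
        + ⟪fderiv ℝ (gradient Htilde) (gradient v z) (fderiv ℝ (gradient v) z w),
            fderiv ℝ (gradient v) z ξ⟫ = 0 := by
    intro z hz w
    have hf : HasFDerivAt (fun z => gradient Htilde (gradient v z))
        ((fderiv ℝ (gradient Htilde) (gradient v z)).comp (fderiv ℝ (gradient v) z)) z :=
      ((hgradH.differentiable one_ne_zero _).hasFDerivAt).comp z (hud z hz).hasFDerivAt
    have hg : HasFDerivAt (fun z => fderiv ℝ (gradient v) z ξ)
        ((ContinuousLinearMap.apply ℝ (EucAux n) ξ).comp (fderiv ℝ (fderiv ℝ (gradient v)) z)) z :=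
      (ContinuousLinearMap.apply ℝ (EucAux n) ξ).hasFDerivAt.comp z (hBd z hz).hasFDerivAt
    have hG := hf.inner ℝ hg
    have hG0 : (fun z => ⟪gradient Htilde (gradient v z), fderiv ℝ (gradient v) z ξ⟫)
        =ᶠ[𝓝 z] fun _ => (0 : ℝ) := by
      filter_upwards [hΩ.mem_nhds hz] with y hy using hHJ1 y hy ξ
    have hfd0 : fderiv ℝ
        (fun z => ⟪gradient Htilde (gradient v z), fderiv ℝ (gradient v) z ξ⟫) z = 0 := by
      rw [hG0.fderiv_eq]; exact fderiv_const_apply 0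
    have := hG.fderiv
    rw [hfd0] at this
    have happ := congrArg (fun (L : (EucAux n) →L[ℝ] ℝ) => L w) this.symm
    simp only [ContinuousLinearMap.zero_apply, ContinuousLinearMap.coe_comp',
      Function.comp_apply, fderivInnerCLM_apply, ContinuousLinearMap.prod_apply,
      ContinuousLinearMap.apply_apply] at happ
    linarith [happ]
  -- the derivative of q along the characteristic
  have hqd : ∀ s ∈ Set.Icc (0 : ℝ) S,
      HasDerivWithinAt (fun s => ⟪fderiv ℝ (gradient v) (x s) ξ, ξ⟫)
        (-⟪fderiv ℝ (gradient Htilde) (gradient v (x s))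
              (fderiv ℝ (gradient v) (x s) ξ),
            fderiv ℝ (gradient v) (x s) ξ⟫)
        (Set.Icc (0 : ℝ) S) s := by
    intro s hs
    have hz := hxΩ s hs
    have h1 := (helper (x s) hz ξ ξ).comp_hasDerivWithinAt s (hx' s hs)
    have hfeq : (fun s => ⟪fderiv ℝ (gradient v) (x s) ξ, ξ⟫)
        = (fun s => ⟪ξ, fderiv ℝ (gradient v) (x s) ξ⟫) :=
      funext fun s => real_inner_comm _ _
    rw [hfeq]
    have hval : (((innerSL ℝ ξ).comp (ContinuousLinearMap.apply ℝ (EucAux n) ξ)).comp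
          (fderiv ℝ (fderiv ℝ (gradient v)) (x s)))
          (gradient Htilde (gradient v (x s)))
        = -⟪fderiv ℝ (gradient Htilde) (gradient v (x s))
              (fderiv ℝ (gradient v) (x s) ξ),
            fderiv ℝ (gradient v) (x s) ξ⟫ := by
      simp only [ContinuousLinearMap.coe_comp', Function.comp_apply, innerSL_apply_apply,
        ContinuousLinearMap.apply_apply]
      rw [real_inner_comm _ ξ]
      rw [hsymm3 (x s) hz (gradient Htilde (gradient v (x s))) ξ]
      rw [hswap (x s) hz ξ (gradient Htilde (gradient v (x s))) ξ]
      rw [real_inner_comm]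
      have := hHJ2 (x s) hz ξ
      linarith
    rw [hval] at h1
    simpa [Function.comp_def] using h1
  refine ⟨?_, hqd⟩
  have hcont : ContinuousOn (fun s => ⟪fderiv ℝ (gradient v) (x s) ξ, ξ⟫)
      (Set.Icc (0 : ℝ) S) := fun s hs => (hqd s hs).continuousWithinAt
  refine antitoneOn_of_deriv_nonpos (convex_Icc 0 S) hcont ?_ ?_
  · rw [interior_Icc]
    intro s hs
    exact ((hqd s (Set.Ioo_subset_Icc_self hs)).hasDerivAt
      (Icc_mem_nhds hs.1 hs.2)).differentiableAt.differentiableWithinAt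
  · rw [interior_Icc]
    intro s hs
    have h := (hqd s (Set.Ioo_subset_Icc_self hs)).hasDerivAt (Icc_mem_nhds hs.1 hs.2)
    rw [h.deriv]
    have := aux_hessian_nonneg hH hHconv (gradient v (x s)) (fderiv ℝ (gradient v) (x s) ξ)
    linarith
end

section
/- Suppose C₂ > 0 and the second difference quotients of ψ satisfy 𝔇²_{h,ξ}ψ(x) ≤ C₂/(d(x) − h) for all x ∈ ℝⁿ, all ξ ∈ ℝⁿ with |ξ| ≤ 1, and all h with 0 < h < d(x). Then the mollification η ∗ ψ satisfies, for all x ∈ ℝⁿ, all ξ with |ξ| ≤ 1, and all h > 0 with h + ε < d(x): 𝔇²_{h,ξ}(η ∗ ψ)(x) ≤ C₂/(d(x) − ε − h). -/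
open RealInnerProductSpace MeasureTheory

/-- If the second difference quotients of a Lipschitz function ψ satisfy
𝔇²_{h,ξ}ψ(x) ≤ C₂/(d(x) − h) for all |ξ| ≤ 1 and 0 < h < d(x), where d is the
Euclidean distance to ∂U, then the mollification η ∗ ψ satisfies
𝔇²_{h,ξ}(η ∗ ψ)(x) ≤ C₂/(d(x) − ε − h) whenever |ξ| ≤ 1 and 0 < h, h + ε < d(x). -/
theorem mollified_second_difference_bound (n : ℕ) (hn : 1 ≤ n)
    (U : Set (EuclideanSpace ℝ (Fin n)))
    (hUopen : IsOpen U) (hUbdd : Bornology.IsBounded U) (hUne : U.Nonempty)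
    (ψ : EuclideanSpace ℝ (Fin n) → ℝ) (L : NNReal) (hψ : LipschitzWith L ψ)
    (ε : ℝ) (hε : 0 < ε)
    (η : EuclideanSpace ℝ (Fin n) → ℝ)
    (hη0 : ∀ y, 0 ≤ η y) (hηint : Integrable η)
    (hηsupp : Function.support η ⊆ Metric.closedBall 0 ε)
    (hη1 : ∫ y, η y = 1)
    (C₂ : ℝ) (hC₂ : 0 < C₂)
    (hD2 : ∀ x ξ : EuclideanSpace ℝ (Fin n), ‖ξ‖ ≤ 1 → ∀ h : ℝ, 0 < h →
      h < Metric.infDist x (frontier U) →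
      (ψ (x + h • ξ) + ψ (x - h • ξ) - 2 * ψ x) / h ^ 2 ≤
        C₂ / (Metric.infDist x (frontier U) - h)) :
    ∀ x ξ : EuclideanSpace ℝ (Fin n), ‖ξ‖ ≤ 1 → ∀ h : ℝ, 0 < h →
      h + ε < Metric.infDist x (frontier U) →
      ((∫ y, η y * ψ (x + h • ξ - y)) + (∫ y, η y * ψ (x - h • ξ - y)) -
          2 * ∫ y, η y * ψ (x - y)) / h ^ 2 ≤
        C₂ / (Metric.infDist x (frontier U) - ε - h) := by

  intro x ξ hξ h hh hhd
  set d := Metric.infDist x (frontier U) with hdS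
  have hd : 0 < d - ε - h := by linarith
  -- Integrability of the mollified translates
  have hψc : Continuous ψ := hψ.continuous
  have key : ∀ z : EuclideanSpace ℝ (Fin n), Integrable (fun y => η y * ψ (z - y)) := by
    intro z
    apply Integrable.mono' (hηint.mul_const (|ψ z| + (L : ℝ) * ε))
    · exact hηint.aestronglyMeasurable.mul
        ((hψc.comp (continuous_const.sub continuous_id)).aestronglyMeasurable)
    · filter_upwards with y
      by_cases hy : η y = 0
      · simp [hy]
      · have hy' : y ∈ Metric.closedBall (0 : EuclideanSpace ℝ (Fin n)) ε :=
          hηsupp (Function.mem_support.2 hy)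
        have hyε : ‖y‖ ≤ ε := by simpa [Metric.mem_closedBall] using hy'
        have h1 : |ψ (z - y)| ≤ |ψ z| + (L : ℝ) * ε := by
          have := hψ.dist_le_mul (z - y) z
          have hdzy : dist (z - y) z = ‖y‖ := by
            simp [dist_eq_norm]
          rw [hdzy] at this
          have : |ψ (z - y) - ψ z| ≤ (L : ℝ) * ε := by
            calc |ψ (z - y) - ψ z| = dist (ψ (z - y)) (ψ z) := by rw [Real.dist_eq]
            _ ≤ (L : ℝ) * ‖y‖ := this
            _ ≤ (L : ℝ) * ε := by
                exact mul_le_mul_of_nonneg_left hyε (L.coe_nonneg)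
          calc |ψ (z - y)| ≤ |ψ z| + |ψ (z - y) - ψ z| := by
                have := abs_sub_abs_le_abs_sub (ψ (z - y)) (ψ z); linarith [abs_sub_comm (ψ (z-y)) (ψ z)]
          _ ≤ |ψ z| + (L : ℝ) * ε := by linarith
        have : ‖η y * ψ (z - y)‖ = η y * |ψ (z - y)| := by
          rw [Real.norm_eq_abs, abs_mul, abs_of_nonneg (hη0 y)]
        rw [this]
        exact mul_le_mul_of_nonneg_left h1 (hη0 y)
  have k1 := key (x + h • ξ)
  have k2 := key (x - h • ξ)
  have k3 := key x
  -- Combine the three integrals into one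
  have e1 : ((∫ y, η y * ψ (x + h • ξ - y)) + (∫ y, η y * ψ (x - h • ξ - y)) -
      2 * ∫ y, η y * ψ (x - y)) =
      ∫ y, η y * (ψ (x + h • ξ - y) + ψ (x - h • ξ - y) - 2 * ψ (x - y)) := by
    have hsub := integral_sub (k1.add k2) (k3.const_mul 2)
    simp only [Pi.add_apply] at hsub
    rw [integral_add k1 k2, integral_const_mul] at hsub
    rw [← hsub]
    exact integral_congr_ae (Filter.Eventually.of_forall fun y => by ring)
  rw [e1, div_eq_mul_inv]
  rw [← integral_mul_const]
  have hint1 : Integrable (fun y => η y * (ψ (x + h • ξ - y) + ψ (x - h • ξ - y) - 2 * ψ (x - y)) * (h ^ 2)⁻¹) := by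
    apply Integrable.mul_const
    have : (fun y => η y * (ψ (x + h • ξ - y) + ψ (x - h • ξ - y) - 2 * ψ (x - y))) =
        fun y => (η y * ψ (x + h • ξ - y) + η y * ψ (x - h • ξ - y)) - 2 * (η y * ψ (x - y)) := by
      ext y; ring
    rw [this]
    exact (k1.add k2).sub (k3.const_mul 2)
  have hint2 : Integrable (fun y => η y * (C₂ / (d - ε - h))) :=
    hηint.mul_const _
  calc (∫ y, η y * (ψ (x + h • ξ - y) + ψ (x - h • ξ - y) - 2 * ψ (x - y)) * (h ^ 2)⁻¹)
      ≤ ∫ y, η y * (C₂ / (d - ε - h)) := by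
        apply integral_mono hint1 hint2
        intro y
        by_cases hy : η y = 0
        · simp [hy]
        · have hy' : y ∈ Metric.closedBall (0 : EuclideanSpace ℝ (Fin n)) ε :=
            hηsupp (Function.mem_support.2 hy)
          have hyε : ‖y‖ ≤ ε := by simpa [Metric.mem_closedBall] using hy'
          have hd' : d - ε ≤ Metric.infDist (x - y) (frontier U) := by
            have h1 := Metric.infDist_le_infDist_add_dist (x := x) (y := x - y) (s := frontier U)
            have h2 : dist x (x - y) = ‖y‖ := by simp [dist_eq_norm]
            rw [h2] at h1
            linarith
          have hhlt : h < Metric.infDist (x - y) (frontier U) := by linarith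
          have hb := hD2 (x - y) ξ hξ h hh hhlt
          have ha1 : x - y + h • ξ = x + h • ξ - y := by abel
          have ha2 : x - y - h • ξ = x - h • ξ - y := by abel
          rw [ha1, ha2] at hb
          have hb2 : C₂ / (Metric.infDist (x - y) (frontier U) - h) ≤ C₂ / (d - ε - h) := by
            apply div_le_div_of_nonneg_left hC₂.le hd
            linarith
          have hb3 : (ψ (x + h • ξ - y) + ψ (x - h • ξ - y) - 2 * ψ (x - y)) * (h ^ 2)⁻¹ ≤
              C₂ / (d - ε - h) := by
            rw [← div_eq_mul_inv]
            exact hb.trans hb2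
          calc η y * (ψ (x + h • ξ - y) + ψ (x - h • ξ - y) - 2 * ψ (x - y)) * (h ^ 2)⁻¹
              = η y * ((ψ (x + h • ξ - y) + ψ (x - h • ξ - y) - 2 * ψ (x - y)) * (h ^ 2)⁻¹) := by ring
            _ ≤ η y * (C₂ / (d - ε - h)) := mul_le_mul_of_nonneg_left hb3 (hη0 y)
    _ = C₂ / (d - ε - h) := by
        rw [integral_mul_const, hη1, one_mul]
end

section
/- Define ψ⁺_ε := η ∗ ψ⁺ and ψ⁻_ε := (η ∗ ψ⁻) + δ where 3C₁ε < δ < 4C₁ε. Then: (i) for every x ∈ ℝⁿ with ψ⁺(x) − ψ⁻(x) > 5C₁ε one has ψ⁻_ε(x) < ψ⁺_ε(x); and (ii) for every x ∈ ℝⁿ with ψ⁻_ε(x) ≤ ψ⁺_ε(x) one has d(x) > ε. -/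
open RealInnerProductSpace MeasureTheory

lemma moll_close {n : ℕ} (C₁ ε : ℝ) (hC₁ : 0 ≤ C₁) (hε : 0 < ε)
    (η f : EuclideanSpace ℝ (Fin n) → ℝ)
    (hη0 : ∀ y, 0 ≤ η y) (hηint : Integrable η)
    (hηsupp : Function.support η ⊆ Metric.closedBall 0 ε)
    (hη1 : ∫ y, η y = 1)
    (hf : ∀ x y, |f x - f y| ≤ C₁ * ‖x - y‖)
    (x : EuclideanSpace ℝ (Fin n)) :
    Integrable (fun y => η y * f (x - y)) ∧
    |(∫ y, η y * f (x - y)) - f x| ≤ C₁ * ε := by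
  have hfc : Continuous f := by
    have : LipschitzWith ⟨C₁, hC₁⟩ f := LipschitzWith.of_dist_le_mul fun a b => by
      rw [Real.dist_eq, dist_eq_norm]; exact hf a b
    exact this.continuous
  have hdiff : ∀ y, η y ≠ 0 → |f (x - y) - f x| ≤ C₁ * ε := by
    intro y hy
    have hy' : ‖y‖ ≤ ε := by
      have := hηsupp (Function.mem_support.mpr hy)
      simpa [Metric.mem_closedBall, dist_zero_right] using this
    have h1 := hf (x - y) x
    have h2 : x - y - x = -y := by abel
    rw [h2, norm_neg] at h1
    exact h1.trans (mul_le_mul_of_nonneg_left hy' hC₁)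
  have hbound : ∀ y, ‖η y * f (x - y)‖ ≤ η y * (|f x| + C₁ * ε) := by
    intro y
    by_cases hy : η y = 0
    · simp [hy]
    · have h1 := hdiff y hy
      have h3 : |f (x - y)| ≤ |f x| + C₁ * ε := by
        have := abs_sub_abs_le_abs_sub (f (x - y)) (f x)
        linarith
      rw [norm_mul, Real.norm_eq_abs, Real.norm_eq_abs, abs_of_nonneg (hη0 y)]
      exact mul_le_mul_of_nonneg_left h3 (hη0 y)
  have hint : Integrable (fun y => η y * f (x - y)) := by
    refine (hηint.mul_const (|f x| + C₁ * ε)).mono' ?_ (.of_forall hbound)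
    exact hηint.aestronglyMeasurable.mul
      ((hfc.comp (continuous_const.sub continuous_id)).aestronglyMeasurable)
  have hintc : Integrable (fun y => η y * f x) := hηint.mul_const _
  have hfx : (∫ y, η y * f x) = f x := by rw [integral_mul_const, hη1, one_mul]
  have key : (∫ y, η y * f (x - y)) - f x = ∫ y, (η y * f (x - y) - η y * f x) := by
    rw [integral_sub hint hintc, hfx]
  refine ⟨hint, ?_⟩
  rw [key]
  have habs : Integrable (fun y => |η y * f (x - y) - η y * f x|) := (hint.sub hintc).abs
  calc |∫ y, (η y * f (x - y) - η y * f x)|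
      ≤ ∫ y, |η y * f (x - y) - η y * f x| := by
        simpa [Real.norm_eq_abs] using
          norm_integral_le_integral_norm (fun y => η y * f (x - y) - η y * f x)
    _ ≤ ∫ y, η y * (C₁ * ε) := by
        refine integral_mono habs (hηint.mul_const _) fun y => ?_
        by_cases hy : η y = 0
        · simp [hy]
        · have h1 := hdiff y hy
          have : |η y * f (x - y) - η y * f x| = η y * |f (x - y) - f x| := by
            rw [← mul_sub, abs_mul, abs_of_nonneg (hη0 y)]
          rw [this]
          exact mul_le_mul_of_nonneg_left h1 (hη0 y)
    _ = C₁ * ε := by rw [integral_mul_const, hη1, one_mul]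

/-- With ψ⁺_ε := η ∗ ψ⁺ and ψ⁻_ε := (η ∗ ψ⁻) + δ where 3C₁ε < δ < 4C₁ε:
(i) if ψ⁺(x) − ψ⁻(x) > 5C₁ε then ψ⁻_ε(x) < ψ⁺_ε(x); and
(ii) if ψ⁻_ε(x) ≤ ψ⁺_ε(x) then d(x) > ε. -/
theorem mollified_obstacles_separation (n : ℕ) (hn : 1 ≤ n)
    (U : Set (EuclideanSpace ℝ (Fin n)))
    (hUopen : IsOpen U) (hUbdd : Bornology.IsBounded U) (hUne : U.Nonempty)
    (C₁ : ℝ) (hC₁ : 0 < C₁)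
    (ψp ψm : EuclideanSpace ℝ (Fin n) → ℝ)
    (hψp : ∀ x y, |ψp x - ψp y| ≤ C₁ * ‖x - y‖)
    (hψm : ∀ x y, |ψm x - ψm y| ≤ C₁ * ‖x - y‖)
    (hψd : ∀ x y, |(ψp x - ψm x) - (ψp y - ψm y)| ≤ C₁ * ‖x - y‖)
    (hbdry : ∀ x ∈ frontier U, ψp x = ψm x)
    (hgap : ∀ x ∉ frontier U,
      0 < ψp x - ψm x ∧ ψp x - ψm x ≤ 2 * C₁ * Metric.infDist x (frontier U))
    (ε : ℝ) (hε : 0 < ε)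
    (η : EuclideanSpace ℝ (Fin n) → ℝ)
    (hη0 : ∀ y, 0 ≤ η y) (hηint : Integrable η)
    (hηsupp : Function.support η ⊆ Metric.closedBall 0 ε)
    (hη1 : ∫ y, η y = 1)
    (δ : ℝ) (hδlo : 3 * C₁ * ε < δ) (hδhi : δ < 4 * C₁ * ε) :
    (∀ x : EuclideanSpace ℝ (Fin n), 5 * C₁ * ε < ψp x - ψm x →
      (∫ y, η y * ψm (x - y)) + δ < ∫ y, η y * ψp (x - y)) ∧
    (∀ x : EuclideanSpace ℝ (Fin n),
      (∫ y, η y * ψm (x - y)) + δ ≤ (∫ y, η y * ψp (x - y)) →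
      ε < Metric.infDist x (frontier U)) := by
  set f : EuclideanSpace ℝ (Fin n) → ℝ := fun z => ψp z - ψm z with hfdef
  have hclose : ∀ x : EuclideanSpace ℝ (Fin n),
      |(∫ y, η y * f (x - y)) - f x| ≤ C₁ * ε ∧
      (∫ y, η y * f (x - y)) = (∫ y, η y * ψp (x - y)) - ∫ y, η y * ψm (x - y) := by
    intro x
    have hp := moll_close C₁ ε hC₁.le hε η ψp hη0 hηint hηsupp hη1 hψp x
    have hm := moll_close C₁ ε hC₁.le hε η ψm hη0 hηint hηsupp hη1 hψm x
    have hd := moll_close C₁ ε hC₁.le hε η f hη0 hηint hηsupp hη1 hψd x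
    refine ⟨hd.2, ?_⟩
    rw [← integral_sub hp.1 hm.1]
    congr 1
    ext y
    simp [hfdef, mul_sub]
  have hub : ∀ x : EuclideanSpace ℝ (Fin n),
      f x ≤ 2 * C₁ * Metric.infDist x (frontier U) := by
    intro x
    by_cases hx : x ∈ frontier U
    · have h0 : f x = 0 := by simp [hfdef, hbdry x hx]
      rw [h0]
      exact mul_nonneg (by positivity) Metric.infDist_nonneg
    · exact (hgap x hx).2
  constructor
  · intro x hx
    obtain ⟨h1, h2⟩ := hclose x
    have := abs_le.mp h1
    have hfx : f x = ψp x - ψm x := rfl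
    linarith [this.1, this.2]
  · intro x hx
    obtain ⟨h1, h2⟩ := hclose x
    have := abs_le.mp h1
    have h3 := hub x
    have h4 : Metric.infDist x (frontier U) ≥ 0 := Metric.infDist_nonneg
    have hfx : f x = ψp x - ψm x := rfl
    nlinarith [this.1, this.2]
end
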